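/- arXiv:1810.10633 — 2 statements merged into one kernel-verified Lean document; each statement's English description precedes it below -/
import Mathlib

section
/- Let {ξ(n), n ∈ ℕ₀^d} be an orthogonal random field (mean zero, finite second moments, uncorrelated at distinct indices). Suppose there is a finite constant C₅ such that sup over m ∈ ℕ₀^d of 𝔼[S(m; 2^n)²] ≤ C₅ 𝔼[S(0; 2^n)²] for all n ∈ ℕ^d, where S(m;n) = Σ_{m < k ≤ m+n} ξ(k). If Σ_{n ∈ ℕ^d} 𝔼[ξ(n)²] / Π_{i=1}^d n_i² < ∞, then S(0;n) / Π_{i=1}^d n_i → 0 almost surely as |n| = max_i n_i → ∞. -/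
/-!
Split `(0, n]` coordinatewise along the binary digits of `n`: with `p i = log₂ (n i)`, the box is
the disjoint union over `j ≤ p` of pieces, each empty or a single dyadic box of side `2 ^ j` inside
`(0, 2 ^ (p + 1)]`. Weighted Cauchy–Schwarz over `j`, followed by summing over all dyadic boxes of
side `2 ^ j` in `(0, 2 ^ (p + 1)]`, bounds `(S(0;n) / ∏ n)²` by a random variable `G p` depending
only on `p` (`dyadicMajorant`). By orthogonality and the hypothesis on translated dyadic boxes,
`𝔼 (G p)` is controlled by partial sums of `𝔼 ξ(k)²`. Exchanging the order of summation, the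
total weight of `𝔼 ξ(k)²` is a product over `i` of sums of `4 ^ (-jᵢ)` over `2 ^ (jᵢ + 1) ≥ kᵢ`,
i.e. `O(∏ kᵢ⁻²)`, so `∑ₚ 𝔼 (G p) < ∞`. Hence `G p → 0` almost surely along the cofinite filter,
and `p` leaves every finite set as `max n → ∞`.
-/

open MeasureTheory Finset Filter Topology
open scoped ENNReal

theorem ENNReal.tsum_pi_prod {ι κ : Type*} [Fintype ι] (f : ι → κ → ℝ≥0∞) :
    ∑' x : ι → κ, ∏ i, f i (x i) = ∏ i, ∑' k, f i k := by
  suffices h : ∀ (n : ℕ) (g : Fin n → κ → ℝ≥0∞),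
      ∑' y : Fin n → κ, ∏ i, g i (y i) = ∏ i, ∑' k, g i k by
    let e := Fintype.equivFin ι
    rw [← (Equiv.arrowCongr e (Equiv.refl κ)).symm.tsum_eq, ← e.symm.prod_comp, ← h]
    exact tsum_congr fun y => by simp [← e.symm.prod_comp]
  intro n
  induction n with
  | zero => simp
  | succ n ih =>
    intro g
    rw [← (Fin.consEquiv fun _ => κ).tsum_eq, ENNReal.tsum_prod']
    simp only [Fin.consEquiv_apply, Fin.prod_univ_succ, Fin.cons_zero, Fin.cons_succ,
      ENNReal.tsum_mul_left, ENNReal.tsum_mul_right, ih]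

theorem tsum_ite_le_eq_tsum_add {M : Type*} [AddCommMonoid M] [TopologicalSpace M] (f : ℕ → M)
    (l : ℕ) : ∑' q, (if l ≤ q then f q else 0) = ∑' s, f (s + l) := by
  rw [← (add_left_injective l).tsum_eq fun q hq => ?_]
  · exact tsum_congr fun s => if_pos (Nat.le_add_left l s)
  · by_cases h : l ≤ q
    · exact ⟨q - l, Nat.sub_add_cancel h⟩
    · exact absurd (if_neg h) hq

theorem ENNReal.tsum_ofReal_mul_geometric {c r : ℝ} (hc : 0 ≤ c) (hr₀ : 0 ≤ r) (hr₁ : r < 1) :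
    ∑' s : ℕ, ENNReal.ofReal (c * r ^ s) = ENNReal.ofReal (c * (1 - r)⁻¹) := by
  rw [← ENNReal.ofReal_tsum_of_nonneg (fun _ => by positivity)
    ((summable_geometric_of_lt_one hr₀ hr₁).mul_left c), tsum_mul_left,
    tsum_geometric_of_lt_one hr₀ hr₁]

theorem tendsto_log_comap_sup_atTop_cofinite {ι : Type*} [Fintype ι] :
    Tendsto (fun (n : ι → ℕ) i => Nat.log 2 (n i))
      (comap (fun n => univ.sup n) atTop) cofinite := by
  refine le_cofinite_iff_compl_singleton_mem.2 fun p => mem_comap.2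
    ⟨Set.Ici (2 ^ (univ.sup p + 1)), Ici_mem_atTop _, fun n hn h => ?_⟩
  obtain ⟨i, -, hi⟩ := (Finset.le_sup_iff (by positivity)).1
    (show 2 ^ (univ.sup p + 1) ≤ univ.sup n from hn)
  have hlog := Nat.le_log_of_pow_le one_lt_two hi
  have hp := le_sup (f := p) (mem_univ i)
  have : Nat.log 2 (n i) = p i := congrFun (Set.mem_singleton_iff.1 h) i
  omega

section Probability

variable {Ω : Type*} [MeasurableSpace Ω] {μ : Measure Ω}

theorem integral_sq_sum_of_orthogonal {κ : Type*} {ξ : κ → Ω → ℝ} (hξ : ∀ k, MemLp (ξ k) 2 μ)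
    (horth : Pairwise fun k l => ∫ ω, ξ k ω * ξ l ω ∂μ = 0) (s : Finset κ) :
    ∫ ω, (∑ k ∈ s, ξ k ω) ^ 2 ∂μ = ∑ k ∈ s, ∫ ω, ξ k ω ^ 2 ∂μ := by
  classical
  have hint (k l : κ) : Integrable (fun ω => ξ k ω * ξ l ω) μ := (hξ k).integrable_mul (hξ l)
  simp_rw [sq, sum_mul_sum]
  rw [integral_finsetSum _ fun k _ => integrable_finsetSum _ fun l _ => hint k l]
  refine sum_congr rfl fun k hk => ?_
  rw [integral_finsetSum _ fun l _ => hint k l,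
    sum_eq_single_of_mem k hk fun l _ hlk => horth hlk.symm]

theorem ae_tendsto_cofinite_zero_of_tsum_lintegral_ne_top {κ : Type*} [Countable κ]
    {f : κ → Ω → ℝ≥0∞} (hf : ∀ k, AEMeasurable (f k) μ) (h : ∑' k, ∫⁻ ω, f k ω ∂μ ≠ ∞) :
    ∀ᵐ ω ∂μ, Tendsto (fun k => f k ω) cofinite (𝓝 0) := by
  rw [← lintegral_tsum hf] at h
  filter_upwards [ae_lt_top' (AEMeasurable.tsum hf) h] with ω hω
  exact ENNReal.tendsto_cofinite_zero_of_tsum_ne_top hω.ne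

end Probability

theorem Antitone.findGreatest_eq_iff {f : ℕ → ℕ} (hf : Antitone f) {L j x : ℕ}
    (hL : f (L + 1) = 0) (hj : j ≤ L) :
    ((0 < x ∧ x ≤ f 0) ∧ Nat.findGreatest (x ≤ f ·) L = j) ↔ f (j + 1) < x ∧ x ≤ f j := by
  rw [Nat.findGreatest_eq_iff]
  constructor
  · rintro ⟨⟨hx, hx0⟩, -, hjx, hgt⟩
    refine ⟨?_, ?_⟩
    · rcases Nat.lt_or_ge j L with h | h
      · exact not_le.1 (hgt j.lt_succ_self h)
      · rw [le_antisymm hj h, hL]; exact hx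
    · rcases Nat.eq_zero_or_pos j with rfl | h
      · exact hx0
      · exact hjx h.ne'
  · rintro ⟨hlt, hle⟩
    refine ⟨⟨by omega, hle.trans (hf (Nat.zero_le j))⟩, hj, fun _ => hle,
      fun n hn _ => not_le.2 ((hf hn).trans_lt hlt)⟩

def dyadicFloor (n j : ℕ) : ℕ := n / 2 ^ j * 2 ^ j

@[simp] theorem dyadicFloor_zero (n : ℕ) : dyadicFloor n 0 = n := by simp [dyadicFloor]

theorem dyadicFloor_succ (n j : ℕ) : dyadicFloor n (j + 1) = 2 * (n / 2 ^ (j + 1)) * 2 ^ j := by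
  rw [dyadicFloor, pow_succ]; ring

theorem dyadicFloor_eq_mul (n j : ℕ) :
    dyadicFloor n j = (2 * (n / 2 ^ (j + 1)) + n / 2 ^ j % 2) * 2 ^ j := by
  rw [dyadicFloor, pow_succ, ← Nat.div_div_eq_div_mul, Nat.div_add_mod]

theorem antitone_dyadicFloor (n : ℕ) : Antitone (dyadicFloor n) :=
  antitone_nat_of_succ_le fun j => by rw [dyadicFloor_succ, dyadicFloor_eq_mul]; gcongr; omega

theorem dyadicFloor_log_succ (n : ℕ) : dyadicFloor n (Nat.log 2 n + 1) = 0 := by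
  rw [dyadicFloor, Nat.div_eq_of_lt (Nat.lt_pow_succ_log_self one_lt_two n), zero_mul]

section Dyadic

variable {ι : Type*} [Fintype ι] [DecidableEq ι]

theorem sum_Icc_one_eq_sum_Iic_of_antitone {M : Type*} [AddCommMonoid M] (x : (ι → ℕ) → M)
    {f : ι → ℕ → ℕ} (hf : ∀ i, Antitone (f i)) {L : ι → ℕ} (hL : ∀ i, f i (L i + 1) = 0) :
    ∑ k ∈ Icc 1 (fun i => f i 0), x k =
      ∑ j ∈ Iic L, ∑ k ∈ Icc (fun i => f i (j i + 1) + 1) (fun i => f i (j i)), x k := by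
  rw [← sum_fiberwise_of_maps_to (t := Iic L)
    (g := fun k i => Nat.findGreatest (k i ≤ f i ·) (L i))
    (fun k _ => mem_Iic.2 fun i => Nat.findGreatest_le _)]
  refine sum_congr rfl fun j hj => congrArg (∑ k ∈ ·, x k) ?_
  ext k
  have hfib := fun i => (hf i).findGreatest_eq_iff (x := k i) (hL i) (mem_Iic.1 hj i)
  simp only [mem_filter, mem_Icc, Pi.le_def, funext_iff, Nat.add_one_le_iff, ← forall_and]
  exact forall_congr' hfib

def dyadicBox (j t : ι → ℕ) : Finset (ι → ℕ) :=
  Icc (fun i => t i * 2 ^ j i + 1) (fun i => t i * 2 ^ j i + 2 ^ j i)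

def dyadicTranslates (p j : ι → ℕ) : Finset (ι → ℕ) :=
  Fintype.piFinset fun i => range (2 ^ (p i + 1 - j i))

-- The `j`-th piece of `(0, n]` is the dyadic box at `2 * (n / 2 ^ (j + 1))` if the `j`-th binary
-- digit of every `n i` is `1`, and is empty otherwise.
theorem sq_sum_Icc_dyadicFloor_le (x : (ι → ℕ) → ℝ) {n j : ι → ℕ}
    (hj : j ≤ fun i => Nat.log 2 (n i)) :
    (∑ k ∈ Icc (fun i => dyadicFloor (n i) (j i + 1) + 1) (fun i => dyadicFloor (n i) (j i)),
        x k) ^ 2 ≤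
      ∑ t ∈ dyadicTranslates (fun i => Nat.log 2 (n i)) j, (∑ k ∈ dyadicBox j t, x k) ^ 2 := by
  by_cases hbit : ∀ i, n i / 2 ^ j i % 2 = 1
  · set t₀ : ι → ℕ := fun i => 2 * (n i / 2 ^ (j i + 1))
    have hbox : Icc (fun i => dyadicFloor (n i) (j i + 1) + 1)
        (fun i => dyadicFloor (n i) (j i)) = dyadicBox j t₀ := by
      simp only [dyadicBox, dyadicFloor_succ, dyadicFloor_eq_mul, hbit, t₀, add_mul, one_mul]
    have ht₀ : t₀ ∈ dyadicTranslates (fun i => Nat.log 2 (n i)) j := by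
      simp only [dyadicTranslates, Fintype.mem_piFinset, mem_range]
      intro i
      obtain ⟨q, hq⟩ := Nat.exists_eq_add_of_le (show j i ≤ Nat.log 2 (n i) from hj i)
      have hn : n i < 2 ^ q * 2 ^ (j i + 1) := by
        rw [← pow_add, show q + (j i + 1) = Nat.log 2 (n i) + 1 by omega]
        exact Nat.lt_pow_succ_log_self one_lt_two _
      rw [show Nat.log 2 (n i) + 1 - j i = q + 1 by omega, pow_succ]
      change 2 * (n i / 2 ^ (j i + 1)) < 2 ^ q * 2
      have := (Nat.div_lt_iff_lt_mul (by positivity)).2 hn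
      omega
    rw [hbox]
    exact single_le_sum (f := fun t => (∑ k ∈ dyadicBox j t, x k) ^ 2)
      (fun _ _ => sq_nonneg _) ht₀
  · obtain ⟨i, hi⟩ := not_forall.1 hbit
    have hempty : Icc (fun i => dyadicFloor (n i) (j i + 1) + 1)
        (fun i => dyadicFloor (n i) (j i)) = ∅ := by
      refine Icc_eq_empty fun h => ?_
      have := h i
      simp only [dyadicFloor_succ, dyadicFloor_eq_mul, Nat.mod_two_ne_one.1 hi, add_zero] at this
      omega
    rw [hempty, sum_empty, zero_pow two_ne_zero]
    exact sum_nonneg fun _ _ => sq_nonneg _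

theorem sum_Iic_prod_pow_sub_le (p : ι → ℕ) :
    ∑ j ∈ Iic p, ∏ i, (3 / 4 : ℝ) ^ (p i - j i) ≤ 4 ^ Fintype.card ι := by
  have h1 (q : ℕ) : ∑ l ∈ Iic q, (3 / 4 : ℝ) ^ (q - l) ≤ 4 :=
    calc ∑ l ∈ Iic q, (3 / 4 : ℝ) ^ (q - l) = ∑ l ∈ Ico 0 (q + 1), (3 / 4 : ℝ) ^ l := by
          rw [← Nat.range_succ_eq_Iic, ← sum_range_reflect, range_eq_Ico]
          refine sum_congr rfl fun l hl => ?_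
          rw [add_tsub_cancel_right, Nat.sub_sub_self (Nat.le_of_lt_succ (mem_Ico.1 hl).2)]
      _ ≤ (3 / 4) ^ 0 / (1 - 3 / 4) := geom_sum_Ico_le_of_lt_one (by norm_num) (by norm_num)
      _ = 4 := by norm_num
  calc ∑ j ∈ Iic p, ∏ i, (3 / 4 : ℝ) ^ (p i - j i)
      = ∏ i, ∑ l ∈ Iic (p i), (3 / 4 : ℝ) ^ (p i - l) := by rw [prod_univ_sum]; rfl
    _ ≤ ∏ _i : ι, (4 : ℝ) := prod_le_prod (fun _ _ => sum_nonneg fun _ _ => by positivity)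
        fun i _ => h1 (p i)
    _ = 4 ^ Fintype.card ι := by rw [prod_const, card_univ]

-- Cauchy–Schwarz with weights `(3/4) ^ (q - l)`, whose sum over `l ≤ q` is at most `4`,
-- followed by the normalisation `4 ^ q ≤ n ^ 2` for `q = log₂ n`.
noncomputable def dyadicWeight (q l : ℕ) : ℝ := 4 / ((3 / 4) ^ (q - l) * 4 ^ q)

theorem dyadicWeight_nonneg (q l : ℕ) : 0 ≤ dyadicWeight q l := by
  unfold dyadicWeight; positivity

noncomputable def dyadicMajorant (Q : (ι → ℕ) → (ι → ℕ) → ℝ) (p : ι → ℕ) : ℝ :=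
  ∑ j ∈ Iic p, (∏ i, dyadicWeight (p i) (j i)) * ∑ t ∈ dyadicTranslates p j, Q j t

theorem dyadicMajorant_nonneg {Q : (ι → ℕ) → (ι → ℕ) → ℝ} (hQ : 0 ≤ Q) (p : ι → ℕ) :
    0 ≤ dyadicMajorant Q p :=
  sum_nonneg fun _ _ => mul_nonneg (prod_nonneg fun _ _ => dyadicWeight_nonneg _ _)
    (sum_nonneg fun _ _ => hQ _ _)

theorem sq_sum_Icc_div_prod_le_dyadicMajorant (x : (ι → ℕ) → ℝ) (n : ι → ℕ) :
    ((∑ k ∈ Icc 1 n, x k) / ∏ i, (n i : ℝ)) ^ 2 ≤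
      dyadicMajorant (fun j t => (∑ k ∈ dyadicBox j t, x k) ^ 2) (fun i => Nat.log 2 (n i)) := by
  rcases eq_or_ne (∏ i, (n i : ℝ)) 0 with hn | hn
  · rw [hn, div_zero, zero_pow two_ne_zero]
    exact dyadicMajorant_nonneg (fun _ _ => sq_nonneg _) _
  set p : ι → ℕ := fun i => Nat.log 2 (n i)
  set c : (ι → ℕ) → ℝ := fun j => ∏ i, (3 / 4 : ℝ) ^ (p i - j i)
  set b : (ι → ℕ) → ℝ := fun j =>
    ∑ k ∈ Icc (fun i => dyadicFloor (n i) (j i + 1) + 1) (fun i => dyadicFloor (n i) (j i)), x k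
  have hc : ∀ j, 0 < c j := fun j => prod_pos fun _ _ => by positivity
  have hdecomp : ∑ k ∈ Icc 1 n, x k = ∑ j ∈ Iic p, b j := by
    simpa only [dyadicFloor_zero] using sum_Icc_one_eq_sum_Iic_of_antitone x
      (fun i => antitone_dyadicFloor (n i)) (fun i => dyadicFloor_log_succ (n i))
  have hCS : (∑ j ∈ Iic p, b j) ^ 2 ≤ 4 ^ Fintype.card ι * ∑ j ∈ Iic p, b j ^ 2 / c j := by
    have := sq_sum_div_le_sum_sq_div (Iic p) b fun j _ => hc j
    rw [div_le_iff₀ (sum_pos (fun j _ => hc j) ⟨p, mem_Iic.2 le_rfl⟩), mul_comm] at this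
    exact this.trans (mul_le_mul_of_nonneg_right (sum_Iic_prod_pow_sub_le p)
      (sum_nonneg fun j _ => div_nonneg (sq_nonneg _) (hc j).le))
  have hpow : ∏ i, (4 : ℝ) ^ p i ≤ (∏ i, (n i : ℝ)) ^ 2 := by
    rw [← prod_pow]
    refine prod_le_prod (fun _ _ => by positivity) fun i _ => ?_
    have h2 : ((2 ^ p i : ℕ) : ℝ) ≤ n i := by
      exact_mod_cast Nat.pow_log_le_self 2 fun h => hn (prod_eq_zero (mem_univ i) (by simp [h]))
    rw [show (4 : ℝ) = 2 ^ 2 by norm_num, ← pow_mul, mul_comm, pow_mul]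
    push_cast at h2
    gcongr
  calc ((∑ k ∈ Icc 1 n, x k) / ∏ i, (n i : ℝ)) ^ 2
      = (∑ j ∈ Iic p, b j) ^ 2 / (∏ i, (n i : ℝ)) ^ 2 := by rw [div_pow, hdecomp]
    _ ≤ 4 ^ Fintype.card ι * (∑ j ∈ Iic p, b j ^ 2 / c j) / ∏ i, (4 : ℝ) ^ p i :=
        div_le_div₀ (mul_nonneg (by positivity)
          (sum_nonneg fun j _ => div_nonneg (sq_nonneg _) (hc j).le)) hCS
          (prod_pos fun _ _ => by positivity) hpow
    _ = ∑ j ∈ Iic p, (∏ i, dyadicWeight (p i) (j i)) * b j ^ 2 := by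
        rw [mul_sum, sum_div]
        refine sum_congr rfl fun j _ => ?_
        simp only [dyadicWeight, c, prod_div_distrib, prod_const, card_univ, prod_mul_distrib]
        field_simp
    _ ≤ _ := by
        refine sum_le_sum fun j hj => mul_le_mul_of_nonneg_left ?_
          (prod_nonneg fun _ _ => dyadicWeight_nonneg _ _)
        exact sq_sum_Icc_dyadicFloor_le x (mem_Iic.1 hj)

theorem dyadicMajorant_le {Q : (ι → ℕ) → (ι → ℕ) → ℝ} {V : (ι → ℕ) → ℝ} {C : ℝ}
    (hQ : ∀ j t, Q j t ≤ C * V j) (p : ι → ℕ) :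
    dyadicMajorant Q p ≤
      C * ∑ j ∈ Iic p, (∏ i, dyadicWeight (p i) (j i) * 2 ^ (p i + 1 - j i)) * V j := by
  rw [dyadicMajorant, mul_sum]
  refine sum_le_sum fun j _ => ?_
  calc (∏ i, dyadicWeight (p i) (j i)) * ∑ t ∈ dyadicTranslates p j, Q j t
      ≤ (∏ i, dyadicWeight (p i) (j i)) * ∑ t ∈ dyadicTranslates p j, C * V j :=
        mul_le_mul_of_nonneg_left (sum_le_sum fun t _ => hQ j t)
          (prod_nonneg fun _ _ => dyadicWeight_nonneg _ _)
    _ = _ := by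
        rw [sum_const, nsmul_eq_mul, dyadicTranslates, Fintype.card_piFinset, prod_mul_distrib]
        push_cast [card_range]
        ring

section Integral

variable {Ω : Type*} [MeasurableSpace Ω] {μ : Measure Ω}

theorem integrable_dyadicMajorant {F : (ι → ℕ) → (ι → ℕ) → Ω → ℝ}
    (hF : ∀ j t, Integrable (F j t) μ) (p : ι → ℕ) :
    Integrable (fun ω => dyadicMajorant (fun j t => F j t ω) p) μ :=
  integrable_finsetSum _ fun j _ => (integrable_finsetSum _ fun t _ => hF j t).const_mul _

theorem integral_dyadicMajorant {F : (ι → ℕ) → (ι → ℕ) → Ω → ℝ}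
    (hF : ∀ j t, Integrable (F j t) μ) (p : ι → ℕ) :
    ∫ ω, dyadicMajorant (fun j t => F j t ω) p ∂μ =
      dyadicMajorant (fun j t => ∫ ω, F j t ω ∂μ) p := by
  unfold dyadicMajorant
  rw [integral_finsetSum _ fun j _ => (integrable_finsetSum _ fun t _ => hF j t).const_mul _]
  refine sum_congr rfl fun j _ => ?_
  rw [integral_const_mul, integral_finsetSum _ fun t _ => hF j t]

end Integral

-- After summing `dyadicMajorant_le` over `p` and exchanging sums, the coefficient of `a k`
-- factors over the coordinates into these kernels (`prod_dyadicKernel`).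
noncomputable def dyadicKernel (m q l : ℕ) : ℝ≥0∞ :=
  if l ≤ q ∧ 1 ≤ m ∧ m ≤ 2 ^ (l + 1) then ENNReal.ofReal (dyadicWeight q l * 2 ^ (q + 1 - l))
  else 0

theorem dyadicWeight_mul_pow (l s : ℕ) :
    dyadicWeight (s + l) l * 2 ^ (s + l + 1 - l) = 8 * (1 / 4) ^ l * (2 / 3) ^ s := by
  rw [dyadicWeight, show s + l - l = s by omega, show s + l + 1 - l = s + 1 by omega]
  simp only [div_pow, one_pow]
  field_simp
  ring

-- For `m = 0` both sides vanish (`128 / 0 = 0` in `ℝ`).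
theorem tsum_tsum_dyadicKernel_le (m : ℕ) :
    ∑' q, ∑' l, dyadicKernel m q l ≤ ENNReal.ofReal (128 / m ^ 2) := by
  rcases Nat.eq_zero_or_pos m with rfl | hm
  · simp [dyadicKernel]
  replace hm : 1 ≤ m := hm
  set r := Nat.clog 2 m - 1
  have hr (l : ℕ) : m ≤ 2 ^ (l + 1) ↔ r ≤ l := by
    rw [← Nat.clog_le_iff_le_pow one_lt_two]; omega
  have hinner (l : ℕ) : ∑' q, dyadicKernel m q l =
      if r ≤ l then ENNReal.ofReal (24 * (1 / 4) ^ l) else 0 := by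
    by_cases hl : r ≤ l
    · simp only [dyadicKernel, (hr l).2 hl, hm, and_true, if_pos hl]
      rw [tsum_ite_le_eq_tsum_add (fun q => ENNReal.ofReal _)]
      simp only [dyadicWeight_mul_pow]
      rw [ENNReal.tsum_ofReal_mul_geometric (by positivity) (by norm_num) (by norm_num)]
      congr 1
      norm_num
      ring
    · simp [dyadicKernel, (hr l).not.2 hl, hl]
  rw [ENNReal.tsum_comm, tsum_congr hinner, tsum_ite_le_eq_tsum_add (fun l => ENNReal.ofReal _)]
  simp only [pow_add, ← mul_assoc, mul_right_comm _ _ ((1 / 4 : ℝ) ^ r)]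
  rw [ENNReal.tsum_ofReal_mul_geometric (by positivity) (by norm_num) (by norm_num)]
  refine ENNReal.ofReal_le_ofReal ((le_div_iff₀ (by positivity)).2 ?_)
  have hm2 : (m : ℝ) ^ 2 ≤ 4 * 4 ^ r := by
    have : (m : ℝ) ≤ 2 ^ (r + 1) := by exact_mod_cast (hr r).2 le_rfl
    calc (m : ℝ) ^ 2 ≤ (2 ^ (r + 1)) ^ 2 := by gcongr
      _ = 4 * 4 ^ r := by rw [← pow_mul, pow_mul']; norm_num; ring
  have h4 : (1 / 4 : ℝ) ^ r * 4 ^ r = 1 := by rw [← mul_pow]; norm_num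
  nlinarith [pow_pos (by norm_num : (0 : ℝ) < 1 / 4) r]

theorem prod_dyadicKernel (k p j : ι → ℕ) :
    ∏ i, dyadicKernel (k i) (p i) (j i) =
      if j ∈ Iic p ∧ k ∈ Icc 1 (fun i => 2 ^ (j i + 1)) then
        ENNReal.ofReal (∏ i, dyadicWeight (p i) (j i) * 2 ^ (p i + 1 - j i)) else 0 := by
  simp only [dyadicKernel, Fintype.prod_ite_zero, mem_Iic, Pi.le_def, mem_Icc, Pi.one_apply,
    ← forall_and]
  rw [ENNReal.ofReal_prod_of_nonneg fun i _ => mul_nonneg (dyadicWeight_nonneg _ _) (by positivity)]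

theorem ofReal_sum_Iic_eq_tsum_tsum_dyadicKernel {a : (ι → ℕ) → ℝ} (ha : 0 ≤ a) (p : ι → ℕ) :
    ENNReal.ofReal (∑ j ∈ Iic p, (∏ i, dyadicWeight (p i) (j i) * 2 ^ (p i + 1 - j i)) *
        ∑ k ∈ Icc 1 (fun i => 2 ^ (j i + 1)), a k) =
      ∑' (j : ι → ℕ) (k : ι → ℕ), ENNReal.ofReal (a k) * ∏ i, dyadicKernel (k i) (p i) (j i) := by
  have hW (j : ι → ℕ) : 0 ≤ ∏ i, dyadicWeight (p i) (j i) * 2 ^ (p i + 1 - j i) :=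
    prod_nonneg fun _ _ => mul_nonneg (dyadicWeight_nonneg _ _) (by positivity)
  simp_rw [prod_dyadicKernel, mul_ite, mul_zero]
  rw [ENNReal.ofReal_sum_of_nonneg fun j _ => mul_nonneg (hW j) (sum_nonneg fun k _ => ha k),
    tsum_eq_sum (s := Iic p) fun j hj => ENNReal.tsum_eq_zero.2 fun k =>
      if_neg fun h => hj h.1]
  refine sum_congr rfl fun j hj => ?_
  rw [tsum_eq_sum fun k hk => if_neg fun h => hk h.2, ENNReal.ofReal_mul (hW j),
    ENNReal.ofReal_sum_of_nonneg fun k _ => ha k, mul_sum]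
  exact sum_congr rfl fun k hk => by rw [if_pos ⟨hj, hk⟩, mul_comm]

theorem tsum_ofReal_sum_Iic_eq_tsum_mul_prod_dyadicKernel {a : (ι → ℕ) → ℝ} (ha : 0 ≤ a) :
    ∑' p : ι → ℕ, ENNReal.ofReal (∑ j ∈ Iic p,
        (∏ i, dyadicWeight (p i) (j i) * 2 ^ (p i + 1 - j i)) *
          ∑ k ∈ Icc 1 (fun i => 2 ^ (j i + 1)), a k) =
      ∑' k, ENNReal.ofReal (a k) * ∏ i, ∑' q, ∑' l, dyadicKernel (k i) q l := by
  simp_rw [ofReal_sum_Iic_eq_tsum_tsum_dyadicKernel ha]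
  rw [tsum_congr fun p => ENNReal.tsum_comm, ENNReal.tsum_comm]
  simp_rw [ENNReal.tsum_mul_left]
  refine tsum_congr fun k => congrArg _ ?_
  rw [← ENNReal.tsum_pi_prod]
  exact tsum_congr fun p => ENNReal.tsum_pi_prod fun i l => dyadicKernel (k i) (p i) l

theorem tsum_ofReal_dyadicMajorant_ne_top {a : (ι → ℕ) → ℝ} (ha : 0 ≤ a)
    (hsum : Summable fun k : {k : ι → ℕ // ∀ i, 1 ≤ k i} => a k / ∏ i, (k.1 i : ℝ) ^ 2)
    {C : ℝ} {Q : (ι → ℕ) → (ι → ℕ) → ℝ}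
    (hQ : ∀ j t, Q j t ≤ C * ∑ k ∈ Icc 1 (fun i => 2 ^ (j i + 1)), a k) :
    ∑' p, ENNReal.ofReal (dyadicMajorant Q p) ≠ ∞ := by
  set f : (ι → ℕ) → ℝ := fun k => 128 ^ Fintype.card ι * (a k / ∏ i, (k i : ℝ) ^ 2)
  -- `f` vanishes off the positive orthant since `a k / 0 = 0`.
  have hf : Summable f := by
    refine Summable.mul_left _ ((Subtype.val_injective.summable_iff fun k hk => ?_).1 hsum)
    obtain ⟨i, hi⟩ : ∃ i, k i = 0 := by
      by_contra! h
      exact hk ⟨⟨k, fun i => Nat.one_le_iff_ne_zero.2 (h i)⟩, rfl⟩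
    change a k / _ = 0
    rw [prod_eq_zero (mem_univ i) (by simp [hi]), div_zero]
  have hkernel (k : ι → ℕ) : ENNReal.ofReal (a k) * ∏ i, ∑' q, ∑' l, dyadicKernel (k i) q l ≤
      ENNReal.ofReal (f k) :=
    calc ENNReal.ofReal (a k) * ∏ i, ∑' q, ∑' l, dyadicKernel (k i) q l
        ≤ ENNReal.ofReal (a k) * ∏ i, ENNReal.ofReal (128 / (k i : ℝ) ^ 2) := by
          gcongr with i
          exact tsum_tsum_dyadicKernel_le _
      _ = ENNReal.ofReal (f k) := by
          rw [← ENNReal.ofReal_prod_of_nonneg fun i _ => by positivity,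
            ← ENNReal.ofReal_mul (ha k), prod_div_distrib, prod_const, card_univ]
          congr 1
          ring
  have hfin : ENNReal.ofReal C * ∑' k, ENNReal.ofReal (f k) ≠ ∞ := by
    rw [← ENNReal.ofReal_tsum_of_nonneg (fun k =>
      mul_nonneg (by positivity) (div_nonneg (ha k) (by positivity))) hf]
    exact ENNReal.mul_ne_top ENNReal.ofReal_ne_top ENNReal.ofReal_ne_top
  refine ne_top_of_le_ne_top hfin ?_
  calc ∑' p, ENNReal.ofReal (dyadicMajorant Q p)
      ≤ ∑' p : ι → ℕ, ENNReal.ofReal C * ENNReal.ofReal (∑ j ∈ Iic p,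
          (∏ i, dyadicWeight (p i) (j i) * 2 ^ (p i + 1 - j i)) *
            ∑ k ∈ Icc 1 (fun i => 2 ^ (j i + 1)), a k) := by
        refine ENNReal.tsum_le_tsum fun p => ?_
        rw [← ENNReal.ofReal_mul' (sum_nonneg fun j _ => mul_nonneg
          (prod_nonneg fun _ _ => mul_nonneg (dyadicWeight_nonneg _ _) (by positivity))
          (sum_nonneg fun k _ => ha k))]
        exact ENNReal.ofReal_le_ofReal (dyadicMajorant_le hQ p)
    _ = ENNReal.ofReal C *
          ∑' k, ENNReal.ofReal (a k) * ∏ i, ∑' q, ∑' l, dyadicKernel (k i) q l := by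
        rw [ENNReal.tsum_mul_left, tsum_ofReal_sum_Iic_eq_tsum_mul_prod_dyadicKernel ha]
    _ ≤ ENNReal.ofReal C * ∑' k, ENNReal.ofReal (f k) := by
        gcongr with k
        exact hkernel k

theorem abs_sum_Icc_div_prod_lt_of_tendsto_dyadicMajorant {x : (ι → ℕ) → ℝ}
    (hx : Tendsto (fun p => ENNReal.ofReal
      (dyadicMajorant (fun j t => (∑ k ∈ dyadicBox j t, x k) ^ 2) p)) cofinite (𝓝 0)) :
    ∀ ε > 0, ∃ N : ℕ, ∀ n : ι → ℕ, N ≤ univ.sup n → |∑ k ∈ Icc 1 n, x k| / ∏ i, (n i : ℝ) < ε := by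
  intro ε hε
  obtain ⟨N, hN⟩ := eventually_atTop.1 <| eventually_comap.1 <|
    (hx.comp tendsto_log_comap_sup_atTop_cofinite).eventually
      (gt_mem_nhds (ENNReal.ofReal_pos.2 (pow_pos hε 2)))
  refine ⟨N, fun n hn => ?_⟩
  have hsq := (sq_sum_Icc_div_prod_le_dyadicMajorant x n).trans_lt
    ((ENNReal.ofReal_lt_ofReal_iff (pow_pos hε 2)).1 (hN _ hn n rfl))
  rw [← abs_of_nonneg (prod_nonneg fun i _ => (n i).cast_nonneg : (0 : ℝ) ≤ ∏ i, (n i : ℝ)),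
    ← abs_div]
  exact abs_lt_of_sq_lt_sq hsq hε.le

end Dyadic

theorem orthogonal_field_SLLN_general
    {Ω : Type*} [MeasurableSpace Ω] (μ : Measure Ω)
    (d : ℕ)
    (ξ : (Fin d → ℕ) → Ω → ℝ)
    (S : (Fin d → ℕ) → (Fin d → ℕ) → Ω → ℝ)
    (hS : ∀ m n ω, S m n ω =
      ∑ k ∈ Finset.Icc (fun i => m i + 1) (fun i => m i + n i), ξ k ω)
    (h_memLp : ∀ n, MemLp (ξ n) 2 μ)
    (h_orth : ∀ m n, m ≠ n → ∫ ω, ξ m ω * ξ n ω ∂μ = 0)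
    (C₅ : ℝ)
    (h_sup : ∀ n : Fin d → ℕ, (∀ i, 1 ≤ n i) → ∀ m : Fin d → ℕ,
        ∫ ω, (S m (fun i => 2 ^ n i) ω) ^ 2 ∂μ ≤
          C₅ * ∫ ω, (S 0 (fun i => 2 ^ n i) ω) ^ 2 ∂μ)
    (h_sum : Summable fun n : {n : Fin d → ℕ // ∀ i, 1 ≤ n i} =>
        (∫ ω, (ξ (n : Fin d → ℕ) ω) ^ 2 ∂μ) /
          ∏ i : Fin d, ((n : Fin d → ℕ) i : ℝ) ^ 2) :
    ∀ᵐ ω ∂μ, ∀ ε > 0, ∃ N : ℕ, ∀ n : Fin d → ℕ,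
      N ≤ Finset.univ.sup n →
        |S 0 n ω| / ∏ i : Fin d, (n i : ℝ) < ε := by
  set a : (Fin d → ℕ) → ℝ := fun k => ∫ ω, ξ k ω ^ 2 ∂μ
  have ha : 0 ≤ a := fun k => integral_nonneg fun ω => sq_nonneg _
  have hvar (s : Finset (Fin d → ℕ)) : ∫ ω, (∑ k ∈ s, ξ k ω) ^ 2 ∂μ = ∑ k ∈ s, a k :=
    integral_sq_sum_of_orthogonal h_memLp (fun m n => h_orth m n) s
  have hS0 (n : Fin d → ℕ) (ω : Ω) : S 0 n ω = ∑ k ∈ Icc 1 n, ξ k ω := by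
    simp only [hS, Pi.zero_apply, zero_add]; rfl
  have hbox (j t : Fin d → ℕ) :
      ∑ k ∈ dyadicBox j t, a k ≤ C₅ * ∑ k ∈ Icc 1 (fun i => 2 ^ (j i + 1)), a k := by
    -- `h_sup` needs exponents `≥ 1`, so compare with a translate of the box of side `2 ^ (j + 1)`.
    have h := h_sup (fun i => j i + 1) (fun i => Nat.le_add_left 1 _) (fun i => t i * 2 ^ j i)
    simp only [hS, hvar, Pi.zero_apply, zero_add] at h
    refine (sum_le_sum_of_subset_of_nonneg ?_ fun k _ _ => ha k).trans h
    exact Icc_subset_Icc le_rfl fun i =>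
      Nat.add_le_add_left (Nat.pow_le_pow_right two_pos (j i).le_succ) _
  have hint (j t : Fin d → ℕ) : Integrable (fun ω => (∑ k ∈ dyadicBox j t, ξ k ω) ^ 2) μ :=
    (memLp_finsetSum _ fun k _ => h_memLp k).integrable_sq
  set G : (Fin d → ℕ) → Ω → ℝ := fun p ω =>
    dyadicMajorant (fun j t => (∑ k ∈ dyadicBox j t, ξ k ω) ^ 2) p
  have hG : ∑' p, ∫⁻ ω, ENNReal.ofReal (G p ω) ∂μ ≠ ∞ := by
    refine (tsum_congr fun p => ?_).trans_ne (tsum_ofReal_dyadicMajorant_ne_top ha h_sum hbox)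
    rw [← ofReal_integral_eq_lintegral_ofReal (integrable_dyadicMajorant hint p)
      (ae_of_all _ fun ω => dyadicMajorant_nonneg (fun _ _ => sq_nonneg _) p),
      integral_dyadicMajorant hint p]
    simp_rw [hvar]
  filter_upwards [ae_tendsto_cofinite_zero_of_tsum_lintegral_ne_top
    (fun p => (integrable_dyadicMajorant hint p).aemeasurable.ennreal_ofReal) hG] with ω hω
  simpa only [hS0] using abs_sum_Icc_div_prod_lt_of_tendsto_dyadicMajorant hω

theorem orthogonal_field_SLLN
    {Ω : Type*} [MeasurableSpace Ω] (μ : Measure Ω) [IsProbabilityMeasure μ]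
    (d : ℕ) (hd : 1 ≤ d)
    (ξ : (Fin d → ℕ) → Ω → ℝ)
    (S : (Fin d → ℕ) → (Fin d → ℕ) → Ω → ℝ)
    (hS : ∀ m n ω, S m n ω =
      ∑ k ∈ Finset.Icc (fun i => m i + 1) (fun i => m i + n i), ξ k ω)
    (h_memLp : ∀ n, MemLp (ξ n) 2 μ)
    (h_mean : ∀ n, ∫ ω, ξ n ω ∂μ = 0)
    (h_orth : ∀ m n, m ≠ n → ∫ ω, ξ m ω * ξ n ω ∂μ = 0)
    (C₅ : ℝ)
    (h_sup : ∀ n : Fin d → ℕ, (∀ i, 1 ≤ n i) → ∀ m : Fin d → ℕ,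
        ∫ ω, (S m (fun i => 2 ^ n i) ω) ^ 2 ∂μ ≤
          C₅ * ∫ ω, (S 0 (fun i => 2 ^ n i) ω) ^ 2 ∂μ)
    (h_sum : Summable fun n : {n : Fin d → ℕ // ∀ i, 1 ≤ n i} =>
        (∫ ω, (ξ (n : Fin d → ℕ) ω) ^ 2 ∂μ) /
          ∏ i : Fin d, ((n : Fin d → ℕ) i : ℝ) ^ 2) :
    ∀ᵐ ω ∂μ, ∀ ε > 0, ∃ N : ℕ, ∀ n : Fin d → ℕ,
      N ≤ Finset.univ.sup n →
        |S 0 n ω| / ∏ i : Fin d, (n i : ℝ) < ε :=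
  orthogonal_field_SLLN_general μ d ξ S hS h_memLp h_orth C₅ h_sup h_sum
end

section
/- Let M(k;n) = max_{1 ≤ j ≤ n} |S(k;j)| where S(k;j) is the sum of ξ over Q_{k+j}\Q_k (spherical shells). For p > 1, any integers k, n ≥ 0, and any 2 ≤ l ≤ a, we have M(k; l a^n)^p ≤ (2^{p−1} − 1)|S(k; (l−1)a^n)|^p + M(k; (l−1)a^n)^p + 2^{p−1} M(k + (l−1)a^n; a^n)^p. -/
/-!
Writing `F r` for the sum of `ξ` over the ball `Q_r`, every shell sum is a difference
`S m n = F (m + n) - F m`, so `S k (u + r) = S k u + S (k + u) r`. Hence, for `u = (l-1) a^n`,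
the running maximum over `[1, u + a^n]` is at most `max (M k u) (|S k u| + M (k + u) a^n)`, and the power-mean bound
`(x + y)^p ≤ 2^(p-1) (x^p + y^p)` together with `|S k u| ≤ M k u` turns this into the claim.
-/

open Finset

/-- The box constraint is redundant (`mem_natBall`); it only makes the ball a `Finset`. -/
def natBall (d r : ℕ) : Finset (Fin d → ℕ) :=
  {k ∈ Icc 0 (fun _ => r) | ∑ i, k i ^ 2 ≤ r ^ 2}

lemma mem_natBall {d r : ℕ} {k : Fin d → ℕ} : k ∈ natBall d r ↔ ∑ i, k i ^ 2 ≤ r ^ 2 := by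
  refine ⟨fun hk => (mem_filter.1 hk).2, fun hk => mem_filter.2 ⟨?_, hk⟩⟩
  refine mem_Icc.2 ⟨fun _ => Nat.zero_le _, fun i => ?_⟩
  have hi : k i ^ 2 ≤ r ^ 2 :=
    (single_le_sum (fun j _ => Nat.zero_le (k j ^ 2)) (mem_univ i)).trans hk
  exact (Nat.pow_le_pow_iff_left two_ne_zero).1 hi

lemma natBall_mono (d : ℕ) : Monotone (natBall d) := fun _ _ hrs _ hk =>
  mem_natBall.2 ((mem_natBall.1 hk).trans (Nat.pow_le_pow_left hrs 2))

lemma filter_shell_eq_natBall_sdiff (d r s : ℕ) :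
    {k ∈ Icc (0 : Fin d → ℕ) (fun _ => s) | ∑ i, k i ^ 2 ≤ s ^ 2 ∧ ¬ ∑ i, k i ^ 2 ≤ r ^ 2}
      = natBall d s \ natBall d r := by
  ext k
  rw [mem_filter, mem_sdiff, mem_natBall, mem_natBall]
  exact and_iff_right_of_imp fun hk => (mem_filter.1 (mem_natBall.2 hk.1)).1

lemma sum_shell_eq_sub {d r s : ℕ} (hrs : r ≤ s) (ξ : (Fin d → ℕ) → ℝ) :
    ∑ k ∈ Icc (0 : Fin d → ℕ) (fun _ => s) with
        ∑ i, k i ^ 2 ≤ s ^ 2 ∧ ¬ ∑ i, k i ^ 2 ≤ r ^ 2, ξ k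
      = ∑ k ∈ natBall d s, ξ k - ∑ k ∈ natBall d r, ξ k := by
  rw [filter_shell_eq_natBall_sdiff, sum_sdiff_eq_sub (natBall_mono d hrs)]

/-- `max_{1 ≤ j ≤ n} |f j|`; for `n = 0` it is `sSup ∅ = 0`. -/
noncomputable def maxAbs (f : ℕ → ℝ) (n : ℕ) : ℝ :=
  sSup ((fun j => |f j|) '' Set.Icc 1 n)

section maxAbs

variable {f g : ℕ → ℝ} {n : ℕ}

lemma maxAbs_nonneg : 0 ≤ maxAbs f n :=
  Real.sSup_nonneg (by rintro _ ⟨j, -, rfl⟩; exact abs_nonneg _)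

lemma abs_le_maxAbs {j : ℕ} (hj : 1 ≤ j) (hjn : j ≤ n) : |f j| ≤ maxAbs f n :=
  le_csSup ((Set.finite_Icc 1 n).image _).bddAbove ⟨j, ⟨hj, hjn⟩, rfl⟩

lemma maxAbs_le {c : ℝ} (hc : 0 ≤ c) (h : ∀ j, 1 ≤ j → j ≤ n → |f j| ≤ c) : maxAbs f n ≤ c :=
  Real.sSup_le (by rintro _ ⟨j, ⟨hj, hjn⟩, rfl⟩; exact h j hj hjn) hc

lemma maxAbs_add_le {u v : ℕ} (hfg : ∀ r, f (u + r) = f u + g r) :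
    maxAbs f (u + v) ≤ max (maxAbs f u) (|f u| + maxAbs g v) := by
  refine maxAbs_le (maxAbs_nonneg.trans (le_max_left _ _)) fun j hj hjuv => ?_
  rcases le_or_gt j u with hju | huj
  · exact (abs_le_maxAbs hj hju).trans (le_max_left _ _)
  · obtain ⟨r, rfl⟩ := Nat.exists_eq_add_of_lt huj
    calc |f (u + (r + 1))| ≤ |f u| + |g (r + 1)| := hfg (r + 1) ▸ abs_add_le _ _
      _ ≤ |f u| + maxAbs g v := by gcongr; exact abs_le_maxAbs (by omega) (by omega)
      _ ≤ _ := le_max_right _ _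

end maxAbs

lemma Real.add_rpow_le_two_rpow_mul {x y p : ℝ} (hx : 0 ≤ x) (hy : 0 ≤ y) (hp : 1 ≤ p) :
    (x + y) ^ p ≤ 2 ^ (p - 1) * (x ^ p + y ^ p) := by
  exact_mod_cast NNReal.rpow_add_le_mul_rpow_add_rpow ⟨x, hx⟩ ⟨y, hy⟩ hp

lemma max_add_rpow_le {x y z p : ℝ} (hx : 0 ≤ x) (hxy : x ≤ y) (hz : 0 ≤ z) (hp : 1 ≤ p) :
    max y (x + z) ^ p ≤ (2 ^ (p - 1) - 1) * x ^ p + y ^ p + 2 ^ (p - 1) * z ^ p := by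
  have h2p : 1 ≤ (2 : ℝ) ^ (p - 1) := Real.one_le_rpow one_le_two (by linarith)
  have hxp : 0 ≤ x ^ p := Real.rpow_nonneg hx p
  have hzp : 0 ≤ z ^ p := Real.rpow_nonneg hz p
  have hxyp : x ^ p ≤ y ^ p := Real.rpow_le_rpow hx hxy (by linarith)
  rcases max_cases y (x + z) with ⟨hmax, -⟩ | ⟨hmax, -⟩ <;> rw [hmax]
  · nlinarith
  · nlinarith [Real.add_rpow_le_two_rpow_mul hx hz hp]

theorem maximal_shell_recursion_pointwise_general
    (d : ℕ)
    (ξ : (Fin d → ℕ) → ℝ)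
    (S : ℕ → ℕ → ℝ)
    -- S m n is the sum of ξ over the spherical shell Q_{m+n} \ Q_m.
    (hS : ∀ m n, S m n =
      ∑ k ∈ (Finset.Icc (0 : Fin d → ℕ) (fun _ => m + n)).filter
          (fun k => ∑ i, (k i) ^ 2 ≤ (m + n) ^ 2 ∧ ¬ (∑ i, (k i) ^ 2 ≤ m ^ 2)),
        ξ k)
    (M : ℕ → ℕ → ℝ)
    -- M m n = max_{1 ≤ j ≤ n} |S m j|
    (hM : ∀ m n, M m n = sSup ((fun j => |S m j|) '' Set.Icc 1 n))
    (p : ℝ) (hp : 1 < p) (a : ℕ) :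
    ∀ k n l : ℕ, 2 ≤ l → l ≤ a →
      M k (l * a ^ n) ^ p ≤
        (2 ^ (p - 1) - 1) * |S k ((l - 1) * a ^ n)| ^ p +
          M k ((l - 1) * a ^ n) ^ p +
          2 ^ (p - 1) * M (k + (l - 1) * a ^ n) (a ^ n) ^ p := by
  intro k n l hl hla
  have hM' : ∀ m, M m = maxAbs (S m) := fun m => funext (hM m)
  have hS_sub : ∀ m n, S m n = ∑ i ∈ natBall d (m + n), ξ i - ∑ i ∈ natBall d m, ξ i :=
    fun m n => (hS m n).trans (sum_shell_eq_sub (Nat.le_add_right m n) ξ)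
  have hS_add : ∀ m u r, S m (u + r) = S m u + S (m + u) r := by
    intro m u r
    rw [hS_sub, hS_sub, hS_sub, Nat.add_assoc]
    ring
  set u := (l - 1) * a ^ n
  have hu : 0 < u := Nat.mul_pos (by omega) (pow_pos (by omega) n)
  have hsplit : l * a ^ n = u + a ^ n := by
    rw [← Nat.succ_mul, Nat.succ_eq_add_one, Nat.sub_add_cancel (by omega)]
  rw [hsplit]
  simp only [hM']
  calc maxAbs (S k) (u + a ^ n) ^ p
      ≤ max (maxAbs (S k) u) (|S k u| + maxAbs (S (k + u)) (a ^ n)) ^ p :=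
        Real.rpow_le_rpow maxAbs_nonneg (maxAbs_add_le (hS_add k u)) (by linarith)
    _ ≤ _ := max_add_rpow_le (abs_nonneg _) (abs_le_maxAbs hu le_rfl) maxAbs_nonneg hp.le

theorem maximal_shell_recursion_pointwise
    (d : ℕ) (hd : 1 ≤ d)
    (ξ : (Fin d → ℕ) → ℝ)
    (S : ℕ → ℕ → ℝ)
    -- S m n is the sum of ξ over the spherical shell Q_{m+n} \ Q_m.
    (hS : ∀ m n, S m n =
      ∑ k ∈ (Finset.Icc (0 : Fin d → ℕ) (fun _ => m + n)).filter
          (fun k => ∑ i, (k i) ^ 2 ≤ (m + n) ^ 2 ∧ ¬ (∑ i, (k i) ^ 2 ≤ m ^ 2)),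
        ξ k)
    (M : ℕ → ℕ → ℝ)
    -- M m n = max_{1 ≤ j ≤ n} |S m j|
    (hM : ∀ m n, M m n = sSup ((fun j => |S m j|) '' Set.Icc 1 n))
    (p : ℝ) (hp : 1 < p) (a : ℕ) (ha : 2 ≤ a) :
    ∀ k n l : ℕ, 2 ≤ l → l ≤ a →
      M k (l * a ^ n) ^ p ≤
        (2 ^ (p - 1) - 1) * |S k ((l - 1) * a ^ n)| ^ p +
          M k ((l - 1) * a ^ n) ^ p +
          2 ^ (p - 1) * M (k + (l - 1) * a ^ n) (a ^ n) ^ p :=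
  maximal_shell_recursion_pointwise_general d ξ S hS M hM p hp a
end
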